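/- Let d ≥ 1 and let α and β be ℤ₂-cochains on the d-dimensional hypercube. Then δ(α ∪ β) = (δα) ∪ β + α ∪ (δβ), as an equality of ℤ₂-cochains (the two sides agree on every cell of the hypercube). -/

import Mathlib

/-- The three possible entries of a cell label of the hypercube:
`dot` = `•` (a spanned direction), `pls` = `+`, `mns` = `−`. -/
inductive Sgn : Type
  | dot : Sgn
  | pls : Sgn
  | mns : Sgn
  deriving DecidableEq

instance : Fintype Sgn :=
  ⟨{Sgn.dot, Sgn.pls, Sgn.mns}, fun x => by cases x <;> simp⟩

/-- A cell of the `d`-dimensional hypercube, labeled by a tuple in `{•,+,−}^d`. -/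
abbrev Cell (d : ℕ) := Fin d → Sgn

/-- A `ℤ₂`-cochain on the `d`-dimensional hypercube. -/
abbrev Cochain (d : ℕ) := Cell d → ZMod 2

/-- The top cell `(•,…,•)`. -/
def topCell (d : ℕ) : Cell d := fun _ => Sgn.dot

/-- The set of coordinates of a cell labeled `•`. -/
def dots {d : ℕ} (w : Cell d) : Finset (Fin d) :=
  Finset.univ.filter (fun j => w j = Sgn.dot)

/-- The coboundary of a `ℤ₂`-cochain: `(δα)(w)` is the sum of `α` over all cells obtained
from `w` by replacing exactly one entry equal to `•` by `+` or by `−`. -/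
def delta {d : ℕ} (α : Cochain d) : Cochain d := fun w =>
  ∑ j ∈ dots w, (α (Function.update w j Sgn.pls) + α (Function.update w j Sgn.mns))

/-- The set of coordinates where both `z` and `z'` are `•`. -/
def bothDot {d : ℕ} (z z' : Cell d) : Finset (Fin d) :=
  Finset.univ.filter (fun j => z j = Sgn.dot ∧ z' j = Sgn.dot)

/-- The allowed values of `(z_j, z'_j)` at a coordinate `j` not in the common-`•` set `I`:
`(+,•)` or `(•,−)` when `ℓ(j) = #{i ∈ I : i < j}` is even, and `(−,•)` or `(•,+)` when it
is odd. -/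
def pairCond {d : ℕ} (I : Finset (Fin d)) (j : Fin d) (a b : Sgn) : Prop :=
  if (I.filter (fun i => i < j)).card % 2 = 0 then
    (a = Sgn.pls ∧ b = Sgn.dot) ∨ (a = Sgn.dot ∧ b = Sgn.mns)
  else
    (a = Sgn.mns ∧ b = Sgn.dot) ∨ (a = Sgn.dot ∧ b = Sgn.pls)

/-- The pairs `(z,z')` appearing in the `m`-th higher cup product evaluated on the cell `w`:
the entries of `w` equal to `+` or `−` are fixed in both arguments, there are exactly `m`
coordinates where both `z` and `z'` are `•`, and at the remaining `•`-coordinates of `w`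
the parity condition `pairCond` holds. -/
def IntPair {d : ℕ} (m : ℕ) (w z z' : Cell d) : Prop :=
  (∀ j, w j ≠ Sgn.dot → z j = w j ∧ z' j = w j) ∧
    (bothDot z z').card = m ∧
    ∀ j, w j = Sgn.dot → j ∉ bothDot z z' → pairCond (bothDot z z') j (z j) (z' j)

open Classical in
/-- The finite set of pairs in `Int_m` relative to the cell `w`. -/
noncomputable def intPairs {d : ℕ} (m : ℕ) (w : Cell d) : Finset (Cell d × Cell d) :=
  Finset.univ.filter (fun p => IntPair m w p.1 p.2)

/-- The higher cup product `α ∪_m β` of `ℤ₂`-cochains: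
`(α ∪_m β)(w) = Σ_{(z,z') ∈ Int_m(w)} α(z)·β(z')`. -/
noncomputable def cup {d : ℕ} (m : ℕ) (α β : Cochain d) : Cochain d := fun w =>
  ∑ p ∈ intPairs m w, α p.1 * β p.2

/-! For `∪₀` the pairs of `Int_0(w)` are exactly the front/back face pairs of `w`: the back face
is spanned by a set `S` of `•`-coordinates of `w` and the front face by the rest. So
`(α ∪ β)(w) = Σ_{S ⊆ dots w} α(front S) β(back S)`. Expanding both sides of the Leibniz rule
over pairs `(S, k)` with `k` a `•`-coordinate of `w` outside `S`, each term `α(front (S ∪ {k}))`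
times `β(back S)` appears twice on the right, and everything else matches the left. -/

lemma Finset.sum_powerset_sum_mem_eq_sum_sdiff {γ M : Type*} [DecidableEq γ] [AddCommMonoid M]
    (D : Finset γ) (f : Finset γ → γ → M) :
    ∑ S ∈ D.powerset, ∑ k ∈ S, f S k = ∑ S ∈ D.powerset, ∑ k ∈ D \ S, f (insert k S) k := by
  rw [Finset.sum_sigma', Finset.sum_sigma']
  refine Finset.sum_nbij' (fun x => ⟨x.1.erase x.2, x.2⟩) (fun x => ⟨insert x.2 x.1, x.2⟩)
    ?_ ?_ ?_ ?_ ?_ <;>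
    rintro ⟨S, k⟩ h <;>
    simp only [Finset.mem_sigma, Finset.mem_powerset, Finset.mem_sdiff] at h ⊢
  · exact ⟨(Finset.erase_subset _ _).trans h.1, h.1 h.2, Finset.notMem_erase _ _⟩
  · exact ⟨Finset.insert_subset h.2.1 h.1, Finset.mem_insert_self _ _⟩
  · simpa using Finset.insert_erase h.2
  · simpa using Finset.erase_insert h.2.2
  · rw [Finset.insert_erase h.2]

section FrontBackFaces

variable {d : ℕ}

def frontFace (w : Cell d) (S : Finset (Fin d)) : Cell d := fun j =>
  if w j = Sgn.dot ∧ j ∈ S then Sgn.pls else w j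

def backFace (w : Cell d) (S : Finset (Fin d)) : Cell d := fun j =>
  if w j = Sgn.dot ∧ j ∉ S then Sgn.mns else w j

@[simp]
lemma mem_dots {w : Cell d} {j : Fin d} : j ∈ dots w ↔ w j = Sgn.dot := by
  simp [dots]

lemma dots_frontFace (w : Cell d) (S : Finset (Fin d)) :
    dots (frontFace w S) = dots w \ S := by
  ext j
  by_cases h : w j = Sgn.dot <;> simp [frontFace, h]

lemma dots_backFace (w : Cell d) (S : Finset (Fin d)) :
    dots (backFace w S) = dots w ∩ S := by
  ext j
  by_cases h : w j = Sgn.dot <;> simp [backFace, h]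

lemma dots_update (w : Cell d) (j : Fin d) {s : Sgn} (hs : s ≠ Sgn.dot) :
    dots (Function.update w j s) = (dots w).erase j := by
  ext i
  rcases eq_or_ne i j with rfl | h
  · simp [hs]
  · simp [h]

lemma bothDot_frontFace_backFace (w : Cell d) (S : Finset (Fin d)) :
    bothDot (frontFace w S) (backFace w S) = ∅ := by
  refine Finset.eq_empty_of_forall_notMem fun j hj => ?_
  rw [bothDot, Finset.mem_filter] at hj
  by_cases h : w j = Sgn.dot <;> by_cases hS : j ∈ S <;> simp [frontFace, backFace, h, hS] at hj

lemma intPair_zero_iff {w z z' : Cell d} :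
    IntPair 0 w z z' ↔ ∃ S ⊆ dots w, frontFace w S = z ∧ backFace w S = z' := by
  constructor
  · rintro ⟨hfixed, hcard, hcond⟩
    have hempty : bothDot z z' = ∅ := Finset.card_eq_zero.mp hcard
    have hdot : ∀ j, w j = Sgn.dot →
        (z j = Sgn.pls ∧ z' j = Sgn.dot) ∨ (z j = Sgn.dot ∧ z' j = Sgn.mns) := by
      intro j hj
      simpa [hempty, pairCond] using hcond j hj (by simp [hempty])
    have hfaces : ∀ j, frontFace w (dots w \ dots z) j = z j ∧
        backFace w (dots w \ dots z) j = z' j := by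
      intro j
      by_cases hj : w j = Sgn.dot
      · rcases hdot j hj with ⟨hz, hz'⟩ | ⟨hz, hz'⟩ <;> simp [frontFace, backFace, hj, hz, hz']
      · simp [frontFace, backFace, hj, hfixed j hj]
    exact ⟨_, Finset.sdiff_subset, funext fun j => (hfaces j).1, funext fun j => (hfaces j).2⟩
  · rintro ⟨S, -, rfl, rfl⟩
    refine ⟨fun j hj => by simp [frontFace, backFace, hj], by simp [bothDot_frontFace_backFace],
      fun j hj _ => ?_⟩
    by_cases hS : j ∈ S <;> simp [bothDot_frontFace_backFace, pairCond, frontFace, backFace, hj, hS]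

lemma intPairs_zero (w : Cell d) :
    intPairs 0 w = (dots w).powerset.image fun S => (frontFace w S, backFace w S) := by
  ext ⟨z, z'⟩
  simp [intPairs, intPair_zero_iff]

lemma cup_zero_apply (α β : Cochain d) (w : Cell d) :
    cup 0 α β w = ∑ S ∈ (dots w).powerset, α (frontFace w S) * β (backFace w S) := by
  rw [cup, intPairs_zero, Finset.sum_image]
  intro S hS T hT hST
  have h := congrArg (fun p => dots p.2) hST
  simpa [dots_backFace, Finset.inter_eq_right.mpr (Finset.mem_powerset.mp hS),
    Finset.inter_eq_right.mpr (Finset.mem_powerset.mp hT)] using h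

lemma frontFace_update (w : Cell d) (j : Fin d) {s : Sgn} (hs : s ≠ Sgn.dot)
    (S : Finset (Fin d)) :
    frontFace (Function.update w j s) S = Function.update (frontFace w S) j s := by
  funext i
  rcases eq_or_ne i j with rfl | h
  · simp [frontFace, hs]
  · simp [frontFace, h]

lemma backFace_update (w : Cell d) (j : Fin d) {s : Sgn} (hs : s ≠ Sgn.dot)
    (S : Finset (Fin d)) :
    backFace (Function.update w j s) S = Function.update (backFace w S) j s := by
  funext i
  rcases eq_or_ne i j with rfl | h
  · simp [backFace, hs]
  · simp [backFace, h]

lemma frontFace_insert {w : Cell d} {k : Fin d} (hk : w k = Sgn.dot) (S : Finset (Fin d)) :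
    frontFace w (insert k S) = Function.update (frontFace w S) k Sgn.pls := by
  funext i
  rcases eq_or_ne i k with rfl | h
  · simp [frontFace, hk]
  · simp [frontFace, h]

lemma backFace_insert {w : Cell d} {k : Fin d} (hk : w k = Sgn.dot) (S : Finset (Fin d)) :
    backFace w (insert k S) = Function.update (backFace w S) k Sgn.dot := by
  funext i
  rcases eq_or_ne i k with rfl | h
  · simp [backFace, hk]
  · simp [backFace, h]

lemma update_backFace_mns {w : Cell d} {k : Fin d} (hk : w k = Sgn.dot) {S : Finset (Fin d)}
    (hkS : k ∉ S) : Function.update (backFace w S) k Sgn.mns = backFace w S :=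
  Function.update_eq_self_iff.mpr (by simp [backFace, hk, hkS])

end FrontBackFaces

section Expansions

variable {d : ℕ} (α β : Cochain d) (w : Cell d)

lemma delta_cup_zero_apply :
    delta (cup 0 α β) w = ∑ S ∈ (dots w).powerset, ∑ k ∈ dots w \ S,
      (α (Function.update (frontFace w S) k Sgn.pls) *
          β (Function.update (backFace w S) k Sgn.pls) +
        α (Function.update (frontFace w S) k Sgn.mns) * β (backFace w S)) := by
  rw [delta]
  refine (Finset.sum_congr rfl fun k hk => ?_).trans
    (Finset.sum_comm' (t := fun k => ((dots w).erase k).powerset) fun k S => ?_)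
  · rw [cup_zero_apply, cup_zero_apply, dots_update w k Sgn.noConfusion,
      dots_update w k Sgn.noConfusion, ← Finset.sum_add_distrib]
    refine Finset.sum_congr rfl fun S hS => ?_
    have hkS : k ∉ S := fun h => Finset.notMem_erase k (dots w) (Finset.mem_powerset.mp hS h)
    rw [frontFace_update _ _ Sgn.noConfusion, frontFace_update _ _ Sgn.noConfusion,
      backFace_update _ _ Sgn.noConfusion, backFace_update _ _ Sgn.noConfusion,
      update_backFace_mns (mem_dots.mp hk) hkS]
  · simp only [Finset.mem_powerset, Finset.subset_erase, Finset.mem_sdiff]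
    tauto

lemma cup_zero_delta_left_apply :
    cup 0 (delta α) β w = ∑ S ∈ (dots w).powerset, ∑ k ∈ dots w \ S,
      (α (Function.update (frontFace w S) k Sgn.pls) +
          α (Function.update (frontFace w S) k Sgn.mns)) * β (backFace w S) := by
  simp only [cup_zero_apply, delta, dots_frontFace, Finset.sum_mul]

lemma cup_zero_delta_right_apply :
    cup 0 α (delta β) w = ∑ S ∈ (dots w).powerset, ∑ k ∈ dots w \ S,
      α (Function.update (frontFace w S) k Sgn.pls) *
        (β (Function.update (backFace w S) k Sgn.pls) + β (backFace w S)) := by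
  calc cup 0 α (delta β) w
      = ∑ S ∈ (dots w).powerset, ∑ k ∈ S, α (frontFace w S) *
          (β (Function.update (backFace w S) k Sgn.pls) +
            β (Function.update (backFace w S) k Sgn.mns)) := by
        refine (cup_zero_apply α _ w).trans (Finset.sum_congr rfl fun S hS => ?_)
        rw [delta, dots_backFace, Finset.inter_eq_right.mpr (Finset.mem_powerset.mp hS),
          Finset.mul_sum]
    _ = _ := by
        rw [Finset.sum_powerset_sum_mem_eq_sum_sdiff]
        refine Finset.sum_congr rfl fun S _ => Finset.sum_congr rfl fun k hk => ?_
        obtain ⟨hkw, hkS⟩ := Finset.mem_sdiff.mp hk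
        rw [frontFace_insert (mem_dots.mp hkw), backFace_insert (mem_dots.mp hkw),
          Function.update_idem, Function.update_idem, update_backFace_mns (mem_dots.mp hkw) hkS]

end Expansions

theorem cup_zero_leibniz (d : ℕ) (α β : Cochain d) :
    delta (cup 0 α β) = cup 0 (delta α) β + cup 0 α (delta β) := by
  have hcancel : ∀ a b c e : ZMod 2, a * b + c * e = (a + c) * e + a * (b + e) := by decide
  funext w
  rw [Pi.add_apply, delta_cup_zero_apply, cup_zero_delta_left_apply, cup_zero_delta_right_apply,
    ← Finset.sum_add_distrib]
  refine Finset.sum_congr rfl fun S _ => ?_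
  rw [← Finset.sum_add_distrib]
  exact Finset.sum_congr rfl fun k _ => hcancel _ _ _ _
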